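/- arXiv:1910.14174 — 4 statements merged into one kernel-verified Lean document; each statement's English description precedes it below -/
import Mathlib

section
/- Let G be a finite group and M a proper subgroup of G. Then the union ⋃_{g∈G} gMg^{-1} of all conjugates of M is a proper subset of G; quantitatively, its cardinality is at most |G| - [G:M] + 1. -/
/-! Conjugating by `g` and by `g * h` with `h ∈ M` gives the same conjugate of `M`, so there are
at most `[G:M]` distinct conjugates, each of size `|M|` and all containing `1`. Counting `1` only
once bounds their union by `1 + [G:M] (|M| - 1) = |G| - [G:M] + 1`, which is less than `|G|` as
soon as `[G:M] ≥ 2`. -/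

theorem Set.ncard_iUnion_le_of_forall_mem {ι α : Type*} [Fintype ι] {s : ι → Set α} {a : α}
    (ha : ∀ i, a ∈ s i) : (⋃ i, s i).ncard ≤ 1 + ∑ i, ((s i).ncard - 1) := by
  have hpred := Set.pred_ncard_le_ncard_sdiff_singleton (⋃ i, s i) a
  have hdiff : ((⋃ i, s i) \ {a}).ncard ≤ ∑ i, ((s i).ncard - 1) := by
    rw [Set.iUnion_sdiff]
    calc (⋃ i, s i \ {a}).ncard ≤ ∑ i, (s i \ {a}).ncard := Set.ncard_iUnion_le_of_fintype _
      _ = ∑ i, ((s i).ncard - 1) := by simp only [Set.ncard_sdiff_singleton_of_mem (ha _)]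
  omega

namespace Subgroup

variable {G : Type*} [Group G] (M : Subgroup G)

theorem image_conj_mul_of_mem (g : G) {h : G} (hh : h ∈ M) :
    (fun m => g * h * m * (g * h)⁻¹) '' (M : Set G) =
      (fun m => g * m * g⁻¹) '' (M : Set G) := by
  ext x
  constructor
  · rintro ⟨m, hm, rfl⟩
    exact ⟨h * m * h⁻¹, M.mul_mem (M.mul_mem hh hm) (M.inv_mem hh), by group⟩
  · rintro ⟨m, hm, rfl⟩
    exact ⟨h⁻¹ * m * h, M.mul_mem (M.mul_mem (M.inv_mem hh) hm) hh, by group⟩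

theorem iUnion_image_conj_eq_iUnion_quotient :
    ⋃ g : G, (fun m => g * m * g⁻¹) '' (M : Set G) =
      ⋃ q : G ⧸ M, (fun m => q.out * m * q.out⁻¹) '' (M : Set G) := by
  refine Set.Subset.antisymm (Set.iUnion_subset fun g => ?_)
    (Set.iUnion_subset fun q => Set.subset_iUnion_of_subset q.out subset_rfl)
  obtain ⟨h, hout⟩ := QuotientGroup.mk_out_eq_mul M g
  refine Set.subset_iUnion_of_subset (g : G ⧸ M) ?_
  rw [hout, image_conj_mul_of_mem M g h.2]

theorem ncard_image_conj (g : G) :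
    ((fun m => g * m * g⁻¹) '' (M : Set G)).ncard = Nat.card M := by
  rw [Set.ncard_image_of_injective _ (fun a b hab => by
    simpa using mul_left_cancel (mul_right_cancel hab)), ← Nat.card_coe_set_eq]
  rfl

theorem ncard_iUnion_image_conj_le [M.FiniteIndex] :
    (⋃ g : G, (fun m => g * m * g⁻¹) '' (M : Set G)).ncard ≤ Nat.card G - M.index + 1 := by
  have := Fintype.ofFinite (G ⧸ M)
  rw [iUnion_image_conj_eq_iUnion_quotient]
  calc _ ≤ 1 + ∑ q : G ⧸ M, (((fun m => q.out * m * q.out⁻¹) '' (M : Set G)).ncard - 1) :=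
        Set.ncard_iUnion_le_of_forall_mem (a := 1) fun q => ⟨1, M.one_mem, by group⟩
    _ = 1 + M.index * (Nat.card M - 1) := by
        simp only [ncard_image_conj, Finset.sum_const, Finset.card_univ, smul_eq_mul,
          ← Nat.card_eq_fintype_card, index]
    _ = Nat.card G - M.index + 1 := by
        rw [Nat.mul_sub_one, index_mul_card, Nat.add_comm]

theorem iUnion_image_conj_ne_univ [Finite G] (hM : M ≠ ⊤) :
    ⋃ g : G, (fun m => g * m * g⁻¹) '' (M : Set G) ≠ Set.univ := by
  intro huniv
  have hle := M.ncard_iUnion_image_conj_le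
  rw [huniv, Set.ncard_univ] at hle
  have h2 := M.one_lt_index_of_ne_top hM
  have hcard : M.index ≤ Nat.card G := by
    rw [← M.index_mul_card]
    exact Nat.le_mul_of_pos_right _ Nat.card_pos
  omega

end Subgroup

/-- Jordan's lemma: for a proper subgroup `M` of a finite group `G`, the union of all
conjugates of `M` is a proper subset of `G`, of cardinality at most `|G| - [G:M] + 1`. -/
theorem stmt_0 {G : Type*} [Group G] [Fintype G] (M : Subgroup G) (hM : M ≠ ⊤) :
    (⋃ g : G, (fun m => g * m * g⁻¹) '' (M : Set G)) ≠ Set.univ ∧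
    (⋃ g : G, (fun m => g * m * g⁻¹) '' (M : Set G)).ncard ≤
      Fintype.card G - M.index + 1 :=
  ⟨M.iUnion_image_conj_ne_univ hM, Fintype.card_eq_nat_card ▸ M.ncard_iUnion_image_conj_le⟩
end

section
/- Let S₁, …, Sₙ (n ≥ 2) be finite groups, each having no nontrivial abelian quotient (i.e., each Sᵢ is perfect). If H is a subgroup of the product S₁ × ⋯ × Sₙ such that for every pair of indices i < j the projection H → Sᵢ × Sⱼ is surjective, then H = S₁ × ⋯ × Sₙ. -/
/-!
For `a ∈ Sᵢ` pick `x ∈ H` with `xᵢ = a` and `xⱼ = 1`; such elements exist for every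
`j ≠ i` by pairwise surjectivity. If `x` is trivial on a set `A` of coordinates and `y` on
`B`, then `⁅x, y⁆` is trivial on `A ∪ B`. Since `Sᵢ` is perfect, induction on `A` shows that
every element of `Sᵢ` is the `i`-th coordinate of an element of `H` trivial on all other
coordinates, so `H` contains every `Pi.mulSingle i a` and hence the whole product.
-/

open scoped commutatorElement

namespace Subgroup

variable {ι : Type*} {S : ι → Type*} [∀ i, Group (S i)]

/-- The `i`-th coordinates of the elements of `H` that are trivial on `A`. -/
def evalTrivialOn (H : Subgroup (∀ i, S i)) (A : Set ι) (i : ι) : Subgroup (S i) :=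
  (H ⊓ pi A fun _ => ⊥).map (Pi.evalMonoidHom S i)

variable {H : Subgroup (∀ i, S i)}

theorem mem_evalTrivialOn {A : Set ι} {i : ι} {a : S i} :
    a ∈ H.evalTrivialOn A i ↔ ∃ x ∈ H, (∀ k ∈ A, x k = 1) ∧ x i = a := by
  simp [evalTrivialOn, mem_pi, and_assoc]

theorem commutator_evalTrivialOn_le (A B : Set ι) (i : ι) :
    ⁅H.evalTrivialOn A i, H.evalTrivialOn B i⁆ ≤ H.evalTrivialOn (A ∪ B) i := by
  rw [commutator_le]
  intro a ha b hb
  obtain ⟨x, hxH, hxA, rfl⟩ := mem_evalTrivialOn.1 ha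
  obtain ⟨y, hyH, hyB, rfl⟩ := mem_evalTrivialOn.1 hb
  refine mem_evalTrivialOn.2 ⟨⁅x, y⁆, ?_, ?_, rfl⟩
  · simp only [commutatorElement_def]
    exact H.mul_mem (H.mul_mem (H.mul_mem hxH hyH) (H.inv_mem hxH)) (H.inv_mem hyH)
  · rintro k (hk | hk)
    · simp [commutatorElement_def, hxA k hk]
    · simp [commutatorElement_def, hyB k hk]

theorem evalTrivialOn_singleton_eq_top {i j : ι}
    (hsurj : Function.Surjective fun x : H => ((x : ∀ k, S k) i, (x : ∀ k, S k) j)) :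
    H.evalTrivialOn {j} i = ⊤ := by
  refine eq_top_iff.2 fun a _ => ?_
  obtain ⟨⟨x, hxH⟩, hx⟩ := hsurj (a, 1)
  exact mem_evalTrivialOn.2
    ⟨x, hxH, by simpa using congrArg Prod.snd hx, congrArg Prod.fst hx⟩

theorem evalTrivialOn_eq_top_of_commutator_eq_top {i : ι} (hperf : _root_.commutator (S i) = ⊤)
    {A : Finset ι} (hA : A.Nonempty) (h : ∀ j ∈ A, H.evalTrivialOn {j} i = ⊤) :
    H.evalTrivialOn A i = ⊤ := by
  induction hA using Finset.Nonempty.cons_induction with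
  | singleton j => simpa using h j (Finset.mem_singleton_self j)
  | cons j s hj hs ih =>
    have hs_top := ih fun k hk => h k (Finset.mem_cons_of_mem hk)
    have hj_top := h j (Finset.mem_cons_self j s)
    refine eq_top_iff.2 ?_
    calc ⊤ = ⁅H.evalTrivialOn {j} i, H.evalTrivialOn s i⁆ := by
          rw [hj_top, hs_top]; exact hperf.symm
      _ ≤ H.evalTrivialOn ({j} ∪ s) i := commutator_evalTrivialOn_le _ _ i
      _ = H.evalTrivialOn (Finset.cons j s hj) i := by rw [Finset.coe_cons, Set.singleton_union]

theorem mulSingle_mem_of_evalTrivialOn_compl_eq_top [DecidableEq ι] {i : ι}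
    (h : H.evalTrivialOn {i}ᶜ i = ⊤) (a : S i) : Pi.mulSingle i a ∈ H := by
  obtain ⟨x, hxH, hx, rfl⟩ := mem_evalTrivialOn.1 (eq_top_iff.1 h (mem_top a))
  convert hxH
  funext k
  by_cases hk : k = i
  · subst hk; simp
  · simp [hk, hx k hk]

end Subgroup

theorem stmt_3_general {n : ℕ} (hn : 2 ≤ n) (S : Fin n → Type*) [∀ i, Group (S i)]
    (hperf : ∀ i, commutator (S i) = ⊤)
    (H : Subgroup (∀ i, S i))
    (hsurj : ∀ i j : Fin n, i < j →
      Function.Surjective fun h : H => ((h : ∀ k, S k) i, (h : ∀ k, S k) j)) :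
    H = ⊤ := by
  classical
  have : Nontrivial (Fin n) := Fin.nontrivial_iff_two_le.2 hn
  have hsurj_ne (i j : Fin n) (hij : i ≠ j) :
      Function.Surjective fun h : H => ((h : ∀ k, S k) i, (h : ∀ k, S k) j) := by
    rcases hij.lt_or_gt with hlt | hgt
    · exact hsurj i j hlt
    · exact Prod.swap_surjective.comp (hsurj j i hgt)
  have hmulSingle (i : Fin n) (a : S i) : Pi.mulSingle i a ∈ H := by
    obtain ⟨j, hj⟩ := exists_ne i
    have htop : H.evalTrivialOn (({i}ᶜ : Finset (Fin n)) : Set (Fin n)) i = ⊤ :=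
      Subgroup.evalTrivialOn_eq_top_of_commutator_eq_top (hperf i) ⟨j, by simpa using hj⟩
        fun k hk => Subgroup.evalTrivialOn_singleton_eq_top
          (hsurj_ne i k (by simpa [eq_comm] using hk))
    exact Subgroup.mulSingle_mem_of_evalTrivialOn_compl_eq_top (by simpa using htop) a
  exact eq_top_iff.2 fun x _ => Subgroup.pi_mem_of_mulSingle_mem x fun i => hmulSingle i (x i)

/-- If `H` is a subgroup of a product of perfect finite groups surjecting onto each pair of
factors, then `H` is the whole product. -/
theorem stmt_3 {n : ℕ} (hn : 2 ≤ n) (S : Fin n → Type*) [∀ i, Group (S i)]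
    [∀ i, Finite (S i)] (hperf : ∀ i, commutator (S i) = ⊤)
    (H : Subgroup (∀ i, S i))
    (hsurj : ∀ i j : Fin n, i < j →
      Function.Surjective fun h : H => ((h : ∀ k, S k) i, (h : ∀ k, S k) j)) :
    H = ⊤ :=
  stmt_3_general hn S hperf H hsurj
end

section
/- Let φ : M → Q be a surjective homomorphism of finite groups, let N be a normal subgroup of M, and let P be a normal subgroup of Q with φ(N) ⊆ P. Suppose that no composition factor of P is isomorphic to a composition factor of the quotient M/N. Then φ(N) = P. -/
universe u

/-- `T` is a composition factor of `G`: some successive quotient of a composition series of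
`G` is isomorphic to `T` (expressed via a surjective homomorphism with prescribed kernel). -/
def IsCompFactor (T : Type*) [Group T] (G : Type*) [Group G] : Prop :=
  ∃ (n : ℕ) (c : Fin (n + 1) → Subgroup G),
    c 0 = ⊥ ∧ c (Fin.last n) = ⊤ ∧
    (∀ i : Fin n, c i.castSucc ≤ c i.succ ∧ c i.castSucc ≠ c i.succ ∧
      ((c i.castSucc).subgroupOf (c i.succ)).Normal ∧
      ∀ L : Subgroup G, c i.castSucc ≤ L → L ≤ c i.succ →
        (L.subgroupOf (c i.succ)).Normal → L = c i.castSucc ∨ L = c i.succ) ∧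
    ∃ (i : Fin n) (φ : ↥(c i.succ) →* T), Function.Surjective φ ∧
      ∀ x : ↥(c i.succ), φ x = 1 ↔ (x : G) ∈ c i.castSucc

/-!
If `K := φ(N)` were a proper subgroup of `P`, its image `P̄` in `Q ⧸ K` would be a nontrivial
normal subgroup; pick a maximal normal proper subgroup `X` of `P̄`. Both `P → Q ⧸ K` and the
induced surjection `M ⧸ N → Q ⧸ K` have image containing `P̄`, and pulling the step `X ⊴ P̄`
back along a homomorphism whose range contains `P̄` gives a step of a composition series of the
source with the same simple quotient. So `P̄ ⧸ X` is a composition factor of both `P` and `M ⧸ N`.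
-/

namespace Subgroup

variable {G H : Type*} [Group G] [Group H]

/-- `X` is a maximal normal proper subgroup of `Y`: the step relation of the series in
`IsCompFactor`. -/
def IsCompStep (X Y : Subgroup G) : Prop :=
  X ≤ Y ∧ X ≠ Y ∧ (X.subgroupOf Y).Normal ∧
    ∀ L : Subgroup G, X ≤ L → L ≤ Y → (L.subgroupOf Y).Normal → L = X ∨ L = Y

def compStepRel : SetRel (Subgroup G) (Subgroup G) := {p | IsCompStep p.1 p.2}

lemma exists_isCompStep [Finite G] {X Y : Subgroup G} (hXY : X ≤ Y) (hne : X ≠ Y)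
    (hX : (X.subgroupOf Y).Normal) : ∃ Z, X ≤ Z ∧ IsCompStep Z Y := by
  let s : Set (Subgroup G) := {Z | X ≤ Z ∧ Z ≤ Y ∧ Z ≠ Y ∧ (Z.subgroupOf Y).Normal}
  obtain ⟨Z, hXZ, ⟨-, hZY, hZne, hZ⟩, hmax⟩ :=
    (Set.toFinite s).exists_le_maximal (a := X) ⟨le_rfl, hXY, hne, hX⟩
  refine ⟨Z, hXZ, hZY, hZne, hZ, fun L hZL hLY hL => ?_⟩
  by_cases hLne : L = Y
  · exact Or.inr hLne
  · exact Or.inl (le_antisymm (hmax ⟨hXZ.trans hZL, hLY, hLne, hL⟩ hZL) hZL)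

lemma exists_relSeries_compStepRel [Finite G] (Y : Subgroup G) :
    ∀ X ≤ Y, (X.subgroupOf Y).Normal →
      ∃ s : RelSeries (compStepRel (G := G)), s.head = X ∧ s.last = Y := by
  induction Y using WellFoundedLT.induction with
  | ind Y ih =>
    intro X hXY hX
    by_cases hXY' : X = Y
    · exact ⟨RelSeries.singleton _ X, rfl, hXY'⟩
    obtain ⟨Z, hXZ, hZY⟩ := exists_isCompStep hXY hXY' hX
    have hXZ' : (X.subgroupOf Z).Normal := (normal_subgroupOf_iff_le_normalizer hXZ).mpr
      (hZY.1.trans ((normal_subgroupOf_iff_le_normalizer hXY).mp hX))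
    obtain ⟨s, hs, hsZ⟩ := ih Z (lt_of_le_of_ne hZY.1 hZY.2.1) X hXZ hXZ'
    exact ⟨s.snoc Y (hsZ ▸ hZY), by simpa using hs, by simp⟩

lemma isCompFactor_of_isCompStep [Finite G] {C A : Subgroup G} [A.Normal]
    (hCA : IsCompStep C A) {T : Type*} [Group T] (u : A →* T) (hu : Function.Surjective u)
    (hker : ∀ x : A, u x = 1 ↔ (x : G) ∈ C) : IsCompFactor T G := by
  obtain ⟨s₁, hs₁, hs₁C⟩ := exists_relSeries_compStepRel C ⊥ bot_le
    (by rw [bot_subgroupOf]; infer_instance)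
  obtain ⟨s₂, hs₂A, hs₂⟩ := exists_relSeries_compStepRel ⊤ A le_top inferInstance
  let s := s₁.append s₂ (show IsCompStep _ _ from hs₁C ▸ hs₂A ▸ hCA)
  let i : Fin s.length := ⟨s₁.length, show s₁.length < s₁.length + s₂.length + 1 by omega⟩
  have hiC : s i.castSucc = C := (s₁.append_apply_left s₂ _ (Fin.last _)).trans hs₁C
  have hiA : s i.succ = A := (s₁.append_apply_right s₂ _ 0).trans hs₂A
  refine ⟨s.length, s, (s₁.head_append s₂ _).trans hs₁, (s₁.last_append s₂ _).trans hs₂,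
    s.step, i, ?_⟩
  rw [hiA, hiC]
  exact ⟨u, hu, hker⟩

lemma IsCompStep.comap {X Y : Subgroup H} (h : IsCompStep X Y) {f : G →* H} (hY : Y ≤ f.range) :
    IsCompStep (X.comap f) (Y.comap f) := by
  obtain ⟨hXY, hne, hX, hmax⟩ := h
  have hX' : X ≤ f.range := hXY.trans hY
  refine ⟨comap_mono hXY, fun heq => hne ?_, ?_, fun L hXL hLY hL => ?_⟩
  · rw [← map_comap_eq_self hX', heq, map_comap_eq_self hY]
  · rw [normal_subgroupOf_iff_le_normalizer (comap_mono hXY),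
      ← comap_normalizer_eq_of_le_range hX']
    exact comap_mono ((normal_subgroupOf_iff_le_normalizer hXY).mp hX)
  · have hL' : (L.map f).comap f = L :=
      comap_map_eq_self ((ker_le_comap f X).trans hXL)
    have hLY' : L.map f ≤ Y := map_le_iff_le_comap.mpr hLY
    have hXL' : X ≤ L.map f := map_comap_eq_self hX' ▸ map_mono hXL
    have hLn : ((L.map f).subgroupOf Y).Normal := by
      rw [normal_subgroupOf_iff_le_normalizer hLY', ← map_comap_eq_self hY]
      refine map_le_iff_le_comap.mpr ?_
      rw [comap_normalizer_eq_of_le_range (hLY'.trans hY), hL']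
      exact (normal_subgroupOf_iff_le_normalizer hLY).mp hL
    rcases hmax _ hXL' hLY' hLn with h | h
    · exact Or.inl (hL' ▸ congrArg (Subgroup.comap f) h)
    · exact Or.inr (hL' ▸ congrArg (Subgroup.comap f) h)

lemma isCompFactor_of_le_range [Finite G] {X Y : Subgroup H} [Y.Normal]
    (h : IsCompStep X Y) {f : G →* H} (hY : Y ≤ f.range) {T : Type*} [Group T] (u : Y →* T)
    (hu : Function.Surjective u) (hker : ∀ y : Y, u y = 1 ↔ (y : H) ∈ X) :
    IsCompFactor T G := by
  refine isCompFactor_of_isCompStep (h.comap hY) (u.comp (f.subgroupComap Y))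
    (hu.comp fun y => ?_) fun _ => hker _
  obtain ⟨x, hx⟩ := hY y.2
  exact ⟨⟨x, show f x ∈ Y from hx ▸ y.2⟩, Subtype.ext hx⟩

end Subgroup

open Subgroup in
/-- If `φ : M → Q` is surjective, `N ⊴ M`, `P ⊴ Q`, `φ(N) ⊆ P`, and no composition factor
of `P` is isomorphic to a composition factor of `M/N`, then `φ(N) = P`. -/
theorem stmt_15 {M Q : Type u} [Group M] [Group Q] [Finite M] [Finite Q]
    (φ : M →* Q) (hφ : Function.Surjective φ)
    (N : Subgroup M) [N.Normal] (P : Subgroup Q) [P.Normal]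
    (hNP : Subgroup.map φ N ≤ P)
    (hdisj : ∀ (T : Type u) [Group T], IsCompFactor T ↥P → ¬ IsCompFactor T (M ⧸ N)) :
    Subgroup.map φ N = P := by
  by_contra hne
  set K := N.map φ
  have : K.Normal := ‹N.Normal›.map φ hφ
  set π := QuotientGroup.mk' K
  have : (P.map π).Normal := ‹P.Normal›.map π (QuotientGroup.mk'_surjective K)
  have hP : ⊥ ≠ P.map π := by
    rw [ne_comm, Ne, Subgroup.map_eq_bot_iff, QuotientGroup.ker_mk']
    exact fun hPK => hne (le_antisymm hNP hPK)
  obtain ⟨X, -, hX⟩ := exists_isCompStep bot_le hP (by rw [bot_subgroupOf]; infer_instance)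
  have hψ := QuotientGroup.map_surjective_of_surjective N K φ
    ((QuotientGroup.mk'_surjective K).comp hφ) (le_comap_map φ N)
  have hπP : P.map π ≤ (π.comp P.subtype).range := by rw [MonoidHom.range_comp, range_subtype]
  have : (X.subgroupOf (P.map π)).Normal := hX.2.2.1
  exact hdisj (P.map π ⧸ X.subgroupOf (P.map π))
    (isCompFactor_of_le_range hX hπP _ (QuotientGroup.mk'_surjective _)
      fun _ => QuotientGroup.eq_one_iff _)
    (isCompFactor_of_le_range hX (fun y _ => hψ y) _ (QuotientGroup.mk'_surjective _)
      fun _ => QuotientGroup.eq_one_iff _)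
end

section
/- Let G be a finite group, G_g a normal subgroup of G, and M a maximal proper subgroup of G such that the quotient map M → G/G_g is surjective. Set C = ⋃_{g∈G} gMg^{-1}. Then C ∩ G_g = ⋃_{g∈G_g} g(M ∩ G_g)g^{-1}, M ∩ G_g is a proper subgroup of G_g, and hence |C ∩ G_g| ≤ |G_g| - 1. -/
/-!
Every `g ∈ G` factors as `g = n m` with `n ∈ G_g` and `m ∈ M`, so each `G`-conjugate of `M`
meets the normal subgroup `G_g` in a `G_g`-conjugate of `M ∩ G_g`. This subgroup is proper,
since `G_g ≤ M` would force `G = M G_g = M`. Jordan's lemma then leaves an element of `G_g`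
outside all of its conjugates: in the transitive action of a finite group on the cosets of a
proper subgroup the numbers of fixed points average to `1` (Burnside), while the identity fixes
at least two cosets, so some element fixes none.
-/

open scoped Pointwise

theorem MulAction.exists_fixedBy_eq_empty {H X : Type*} [Group H] [Finite H] [MulAction H X]
    [Finite X] [IsPretransitive H X] (hX : 1 < Nat.card X) :
    ∃ g : H, fixedBy X g = ∅ := by
  classical
  have := Fintype.ofFinite H
  have := Fintype.ofFinite X
  by_contra! hfix
  have : Nonempty X := Nat.card_pos_iff.1 (by omega) |>.1
  have : Unique (orbitRel.Quotient H X) :=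
    ((pretransitive_iff_unique_quotient_of_nonempty H X).1 inferInstance).some
  have hburnside := sum_card_fixedBy_eq_card_orbits_mul_card_group H X
  rw [Fintype.card_unique, one_mul] at hburnside
  have hlt : ∑ _g : H, 1 < ∑ g : H, Fintype.card (fixedBy X g) :=
    Finset.sum_lt_sum (fun g _ => Fintype.card_pos_iff.2 (hfix g).to_subtype)
      ⟨1, Finset.mem_univ _, by simpa [Set.toFinset_univ, Nat.card_eq_fintype_card] using hX⟩
  rw [Finset.sum_const, Finset.card_univ, smul_eq_mul, mul_one, hburnside] at hlt
  exact hlt.false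

theorem mem_image_conj_iff {G : Type*} [Group G] {S : Set G} {g x : G} :
    x ∈ (fun m => g * m * g⁻¹) '' S ↔ g⁻¹ * x * g ∈ S := by
  constructor
  · rintro ⟨m, hm, rfl⟩
    simpa [mul_assoc] using hm
  · exact fun h => ⟨_, h, by group⟩

namespace Subgroup

variable {G : Type*} [Group G]

theorem exists_forall_conj_notMem [Finite G] {K : Subgroup G} (hK : K ≠ ⊤) :
    ∃ x : G, ∀ g : G, g⁻¹ * x * g ∉ K := by
  obtain ⟨x, hx⟩ := MulAction.exists_fixedBy_eq_empty (H := G) (X := G ⧸ K)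
    (one_lt_index_of_ne_top hK)
  refine ⟨x, fun g hg => (Set.eq_empty_iff_forall_notMem.1 hx) (g : G ⧸ K) ?_⟩
  rw [MulAction.mem_fixedBy, MulAction.Quotient.smul_mk, smul_eq_mul, QuotientGroup.eq]
  simpa [mul_assoc] using K.inv_mem hg

theorem exists_mem_forall_conj_notMem [Finite G] {K N : Subgroup G} (hKN : K < N) :
    ∃ x ∈ N, ∀ g ∈ N, g⁻¹ * x * g ∉ K := by
  obtain ⟨x, hx⟩ := exists_forall_conj_notMem (K := K.subgroupOf N)
    (mt subgroupOf_eq_top.1 (not_le_of_gt hKN))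
  exact ⟨x, x.2, fun g hg => by simpa [mem_subgroupOf] using hx ⟨g, hg⟩⟩

theorem ncard_biUnion_conj_lt [Finite G] {K N : Subgroup G} (hKN : K < N) :
    (⋃ g ∈ N, (fun k => g * k * g⁻¹) '' (K : Set G)).ncard < Nat.card N := by
  obtain ⟨x, hxN, hx⟩ := exists_mem_forall_conj_notMem hKN
  rw [← Nat.card_coe_set_eq]
  refine Set.ncard_lt_ncard ((Set.ssubset_iff_of_subset ?_).2 ⟨x, hxN, ?_⟩) (Set.toFinite _)
  · simp only [Set.iUnion_subset_iff]
    rintro g hg _ ⟨k, hk, rfl⟩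
    exact N.mul_mem (N.mul_mem hg (hKN.le hk)) (N.inv_mem hg)
  · simp only [Set.mem_iUnion, mem_image_conj_iff, not_exists]
    exact hx

theorem iUnion_conj_inter_normal_of_sup_eq_top {M N : Subgroup G} [N.Normal] (hMN : M ⊔ N = ⊤) :
    (⋃ g : G, (fun m => g * m * g⁻¹) '' (M : Set G)) ∩ N =
      ⋃ g ∈ N, (fun m => g * m * g⁻¹) '' ((M ⊓ N : Subgroup G) : Set G) := by
  ext x
  simp only [Set.mem_inter_iff, Set.mem_iUnion, mem_image_conj_iff, SetLike.mem_coe, mem_inf]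
  constructor
  · rintro ⟨⟨g, hg⟩, hxN⟩
    have hgNM : g ∈ (N : Set G) * (M : Set G) := by rw [← normal_mul, sup_comm, hMN]; trivial
    obtain ⟨n, hn, m, hm, rfl⟩ := hgNM
    refine ⟨n, hn, ?_, ?_⟩
    · simpa [mul_assoc] using M.mul_mem (M.mul_mem hm hg) (M.inv_mem hm)
    · exact Normal.conj_mem' ‹_› x hxN n
  · rintro ⟨g, hgN, hM, hN⟩
    refine ⟨⟨g, hM⟩, ?_⟩
    simpa [mul_assoc] using Normal.conj_mem ‹_› _ hN g

end Subgroup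

theorem stmt_17_general {G : Type*} [Group G] [Fintype G] (Gg : Subgroup G) [Gg.Normal]
    (M : Subgroup G) (hMne : M ≠ ⊤)
    (hsurj : ∀ x : G, ∃ m ∈ M, ∃ h ∈ Gg, x = m * h) :
    ((⋃ g : G, (fun m => g * m * g⁻¹) '' (M : Set G)) ∩ (Gg : Set G) =
      ⋃ g ∈ Gg, (fun m => g * m * g⁻¹) '' ((M ⊓ Gg : Subgroup G) : Set G)) ∧
    M ⊓ Gg < Gg ∧
    ((⋃ g : G, (fun m => g * m * g⁻¹) '' (M : Set G)) ∩ (Gg : Set G)).ncard ≤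
      Nat.card Gg - 1 := by
  have hsup : M ⊔ Gg = ⊤ := eq_top_iff.2 fun x _ => by
    obtain ⟨m, hm, h, hh, rfl⟩ := hsurj x
    exact Subgroup.mul_mem_sup hm hh
  have hproper : M ⊓ Gg < Gg := inf_lt_right.2 fun hle => hMne (sup_eq_left.2 hle ▸ hsup)
  have hunion := Subgroup.iUnion_conj_inter_normal_of_sup_eq_top hsup
  refine ⟨hunion, hproper, ?_⟩
  rw [hunion]
  exact Nat.le_sub_one_of_lt (Subgroup.ncard_biUnion_conj_lt hproper)

/-- For a maximal subgroup `M` of a finite group `G` surjecting onto `G/G_g`, the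
intersection of `⋃ gMg⁻¹` with `G_g` is the union of the `G_g`-conjugates of `M ∩ G_g`,
which is a proper subgroup of `G_g`; hence `|C ∩ G_g| ≤ |G_g| - 1`. -/
theorem stmt_17 {G : Type*} [Group G] [Fintype G] (Gg : Subgroup G) [Gg.Normal]
    (M : Subgroup G) (hMne : M ≠ ⊤)
    (hmax : ∀ M' : Subgroup G, M < M' → M' = ⊤)
    (hsurj : ∀ x : G, ∃ m ∈ M, ∃ h ∈ Gg, x = m * h) :
    ((⋃ g : G, (fun m => g * m * g⁻¹) '' (M : Set G)) ∩ (Gg : Set G) =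
      ⋃ g ∈ Gg, (fun m => g * m * g⁻¹) '' ((M ⊓ Gg : Subgroup G) : Set G)) ∧
    M ⊓ Gg < Gg ∧
    ((⋃ g : G, (fun m => g * m * g⁻¹) '' (M : Set G)) ∩ (Gg : Set G)).ncard ≤
      Nat.card Gg - 1 :=
  stmt_17_general Gg M hMne hsurj
end
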